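/- Let n ≥ 3 and S = Bⁿ the n-fold direct product of the Boolean semiring B = {0,1}, 1+1=1. Then the set W = {ē₁,…,ēₙ}, where ēᵢ has 1 in every component except the i-th which is 0, is a resolving set for Γ₁(S); hence dim(Γ₁(S)) ≤ n. -/

import Mathlib

/-- `x` is a zero-divisor of the commutative semiring `S`. -/
def IsZD {S : Type*} [CommSemiring S] (x : S) : Prop :=
  ∃ y : S, y ≠ 0 ∧ x * y = 0

/-- The total graph of a commutative semiring: distinct `x, y` are adjacent
iff `x + y` is a zero-divisor. -/
def totalGraph (S : Type*) [CommSemiring S] : SimpleGraph S where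
  Adj x y := x ≠ y ∧ IsZD (x + y)
  symm := by
    constructor
    intro x y h
    exact ⟨h.1.symm, by rw [add_comm]; exact h.2⟩
  loopless := by constructor; intro x h; exact h.1 rfl

/-- The induced subgraph of the total graph on the set of zero-divisors. -/
def gamma1 (S : Type*) [CommSemiring S] : SimpleGraph {x : S // IsZD x} :=
  SimpleGraph.comap Subtype.val (totalGraph S)

/-- A resolving set: distinct vertices have distinct distance vectors to `W`. -/
def IsResolving {V : Type*} (G : SimpleGraph V) (W : Set V) : Prop :=
  ∀ x y : V, (∀ w ∈ W, G.dist x w = G.dist y w) → x = y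

/-- The metric dimension: the least cardinality of a resolving set. -/
noncomputable def metricDim {V : Type*} (G : SimpleGraph V) : ℕ :=
  sInf {k | ∃ W : Set V, W.Finite ∧ W.ncard = k ∧ IsResolving G W}

/-- The Boolean semiring `𝔹 = {0,1}` with `1 + 1 = 1`. -/
inductive BB : Type
  | zero : BB
  | one : BB
deriving DecidableEq

instance : Zero BB := ⟨.zero⟩
instance : One BB := ⟨.one⟩
instance : Add BB := ⟨fun x y => match x, y with | .zero, y => y | .one, _ => .one⟩
instance : Mul BB := ⟨fun x y => match x, y with | .zero, _ => .zero | .one, y => y⟩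
instance : Fintype BB := ⟨{.zero, .one}, by intro x; cases x <;> decide⟩

instance : CommSemiring BB where
  add_assoc := by decide
  zero_add := by decide
  add_zero := by decide
  add_comm := by decide
  mul_assoc := by decide
  one_mul := by decide
  mul_one := by decide
  left_distrib := by decide
  right_distrib := by decide
  zero_mul := by decide
  mul_zero := by decide
  mul_comm := by decide
  nsmul := nsmulRec
  npow := npowRec


/-!
The zero vector is adjacent to every other vertex, so `Γ₁(Bⁿ)` is connected, and a vertex `x`
lies within distance `1` of `ēᵢ` exactly when `xᵢ = 0`: the only zero coordinate of `ēᵢ` is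
the `i`-th one. Hence the distances to `ē₁, …, ēₙ` determine the zero pattern of `x`, which
is `x` itself.
-/

namespace BB

instance : Nontrivial BB := ⟨⟨0, 1, by decide⟩⟩

instance : NoZeroDivisors BB := ⟨fun {a b} => by cases a <;> cases b <;> decide⟩

lemma add_eq_zero_iff (a b : BB) : a + b = 0 ↔ a = 0 ∧ b = 0 := by
  cases a <;> cases b <;> decide

lemma eq_of_eq_zero_iff {a b : BB} (h : a = 0 ↔ b = 0) : a = b := by
  revert h
  cases a <;> cases b <;> decide

end BB

namespace SimpleGraph

variable {V : Type*} {G : SimpleGraph V} {u v : V}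

lemma Reachable.dist_le_one_iff (h : G.Reachable u v) : G.dist u v ≤ 1 ↔ u = v ∨ G.Adj u v := by
  rw [← h.dist_eq_zero_iff, ← dist_eq_one_iff_adj]
  omega

end SimpleGraph

lemma metricDim_le_ncard {V : Type*} {G : SimpleGraph V} {W : Set V} (hW : W.Finite)
    (hres : IsResolving G W) : metricDim G ≤ W.ncard :=
  Nat.sInf_le ⟨W, hW, rfl, hres⟩

lemma isZD_pi_iff {ι R : Type*} [CommSemiring R] [NoZeroDivisors R] [Nontrivial R]
    (x : ι → R) : IsZD x ↔ ∃ i, x i = 0 := by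
  classical
  constructor
  · rintro ⟨y, hy, hxy⟩
    obtain ⟨i, hi⟩ := Function.ne_iff.mp hy
    exact ⟨i, (mul_eq_zero.mp (congrFun hxy i)).resolve_right hi⟩
  · rintro ⟨i, hi⟩
    refine ⟨Pi.single i 1, by simp, funext fun j => ?_⟩
    by_cases hj : j = i
    · subst hj; simp [hi]
    · simp [hj]

namespace Gamma1

variable {ι : Type*}

lemma adj_iff (x y : {x : ι → BB // IsZD x}) :
    (gamma1 (ι → BB)).Adj x y ↔ x ≠ y ∧ ∃ i, x.1 i = 0 ∧ y.1 i = 0 := by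
  change x.1 ≠ y.1 ∧ IsZD (x.1 + y.1) ↔ _
  simp only [isZD_pi_iff, Pi.add_apply, BB.add_eq_zero_iff, ne_eq, Subtype.ext_iff]

lemma preconnected : (gamma1 (ι → BB)).Preconnected := by
  intro u v
  obtain ⟨i, -⟩ := (isZD_pi_iff u.1).mp u.2
  let zero : {x : ι → BB // IsZD x} := ⟨0, (isZD_pi_iff _).mpr ⟨i, rfl⟩⟩
  have reachable_zero (w : {x : ι → BB // IsZD x}) : (gamma1 (ι → BB)).Reachable w zero := by
    by_cases hw : w = zero
    · rw [hw]
    obtain ⟨j, hj⟩ := (isZD_pi_iff w.1).mp w.2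
    exact ((adj_iff w zero).mpr ⟨hw, j, hj, rfl⟩).reachable
  exact (reachable_zero u).trans (reachable_zero v).symm

variable [DecidableEq ι]

/-- The vertex `ēᵢ`, with `0` in position `i` and `1` elsewhere. -/
def coatomVertex (i : ι) : {x : ι → BB // IsZD x} :=
  ⟨fun j => if j = i then 0 else 1, (isZD_pi_iff _).mpr ⟨i, if_pos rfl⟩⟩

lemma coatomVertex_apply_eq_zero_iff (i j : ι) : (coatomVertex i).1 j = 0 ↔ j = i := by
  by_cases hj : j = i <;> simp [coatomVertex, hj]

lemma adj_coatomVertex_iff (x : {x : ι → BB // IsZD x}) (i : ι) :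
    (gamma1 (ι → BB)).Adj x (coatomVertex i) ↔ x ≠ coatomVertex i ∧ x.1 i = 0 := by
  simp only [adj_iff, coatomVertex_apply_eq_zero_iff, exists_eq_right]

lemma dist_coatomVertex_le_one_iff (x : {x : ι → BB // IsZD x}) (i : ι) :
    (gamma1 (ι → BB)).dist x (coatomVertex i) ≤ 1 ↔ x.1 i = 0 := by
  rw [(preconnected x _).dist_le_one_iff, adj_coatomVertex_iff]
  constructor
  · rintro (rfl | ⟨-, hx⟩)
    exacts [(coatomVertex_apply_eq_zero_iff i i).mpr rfl, hx]
  · intro hx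
    exact (em _).imp id fun hne => ⟨hne, hx⟩

lemma isResolving_range_coatomVertex :
    IsResolving (gamma1 (ι → BB)) (Set.range coatomVertex) := by
  intro x y h
  have hzero (i : ι) : x.1 i = 0 ↔ y.1 i = 0 := by
    rw [← dist_coatomVertex_le_one_iff, ← dist_coatomVertex_le_one_iff, h _ ⟨i, rfl⟩]
  exact Subtype.ext (funext fun i => BB.eq_of_eq_zero_iff (hzero i))

end Gamma1

open Gamma1 in
theorem stmt10_general (n : ℕ) :
    IsResolving (gamma1 (Fin n → BB))
      {v : {x : Fin n → BB // IsZD x} |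
        ∃ i : Fin n, v.val = fun j => if j = i then (0 : BB) else 1} ∧
      metricDim (gamma1 (Fin n → BB)) ≤ n := by
  have hW : {v : {x : Fin n → BB // IsZD x} |
      ∃ i : Fin n, v.val = fun j => if j = i then (0 : BB) else 1} = Set.range coatomVertex := by
    ext v
    simp only [Set.mem_ofPred_eq, Set.mem_range, coatomVertex, Subtype.ext_iff, eq_comm]
  rw [hW]
  refine ⟨isResolving_range_coatomVertex, ?_⟩
  calc metricDim (gamma1 (Fin n → BB))
      ≤ (Set.range coatomVertex).ncard :=
        metricDim_le_ncard (Set.finite_range _) isResolving_range_coatomVertex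
    _ ≤ Nat.card (Fin n) := Finite.card_range_le _
    _ = n := Nat.card_fin n

theorem stmt10 (n : ℕ) (hn : 3 ≤ n) :
    IsResolving (gamma1 (Fin n → BB))
      {v : {x : Fin n → BB // IsZD x} |
        ∃ i : Fin n, v.val = fun j => if j = i then (0 : BB) else 1} ∧
      metricDim (gamma1 (Fin n → BB)) ≤ n :=
  stmt10_general n
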